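/- Let K be a local field of characteristic p > 0 and let L/K be a finite totally ramified Galois extension whose degree is a power of p. Then VC(L/K) holds; i.e., every x ∈ L* with v_L(x) ≡ −d_{L/K} − 1 (mod e_{L/K}) is a normal basis generator of L over K. -/

import Mathlib

/-- A local field structure on a field `K`: a normalized (surjective) discrete
valuation `v : K* ↠ ℤ`, extended by a junk value at `0`, with respect to which
`K` is complete. -/
structure LocalFieldStruct (K : Type) [Field K] where
  /-- the valuation; its value at `0` is irrelevant -/
  v : K → ℤ
  v_mul : ∀ x y : K, x ≠ 0 → y ≠ 0 → v (x * y) = v x + v y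
  v_add : ∀ x y : K, x ≠ 0 → y ≠ 0 → x + y ≠ 0 → min (v x) (v y) ≤ v (x + y)
  v_surj : ∀ n : ℤ, ∃ x : K, x ≠ 0 ∧ v x = n
  complete : ∀ a : ℕ → K,
      (∀ N : ℤ, ∃ M : ℕ, ∀ m : ℕ, M ≤ m → ∀ n : ℕ, M ≤ n →
        a m = a n ∨ N ≤ v (a m - a n)) →
      ∃ x : K, ∀ N : ℤ, ∃ M : ℕ, ∀ n : ℕ, M ≤ n → a n = x ∨ N ≤ v (a n - x)

namespace LocalFieldStruct

variable {K L : Type} [Field K] [Field L]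

/-- `x` lies in the valuation ring `O_K`. -/
def Integral (w : LocalFieldStruct K) (x : K) : Prop :=
  x = 0 ∨ 0 ≤ w.v x

/-- The residue characteristic of `K` is the prime `p`, i.e. `p` maps to `0`
in the residue field of the valuation ring. -/
def ResidueCharP (w : LocalFieldStruct K) (p : ℕ) : Prop :=
  p.Prime ∧ ((p : K) = 0 ∨ 0 < w.v (p : K))

/-- `K` has mixed characteristic `(0, p)`: `K` has characteristic `0` and its
residue field has characteristic `p > 0`. -/
def MixedChar (w : LocalFieldStruct K) (p : ℕ) : Prop :=
  CharZero K ∧ p.Prime ∧ 0 < w.v (p : K)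

/-- `e` is the ramification index `e_{L/K}`: the valuation of `L` restricted to
`K` is `e` times the valuation of `K`. -/
def IsRamificationIndex (wK : LocalFieldStruct K) (wL : LocalFieldStruct L)
    [Algebra K L] (e : ℕ) : Prop :=
  0 < e ∧ ∀ x : K, x ≠ 0 → wL.v (algebraMap K L x) = (e : ℤ) * wK.v x

/-- `d` is the valuation `d_{L/K}` of the different of `L/K`, characterized by
`Tr_{L/K}(𝔭_L^i) ⊆ O_K ↔ i ≥ -d` for all `i : ℤ`. -/
def IsDifferentVal (wK : LocalFieldStruct K) (wL : LocalFieldStruct L)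
    [Algebra K L] (d : ℤ) : Prop :=
  ∀ i : ℤ,
    (∀ x : L, (x ≠ 0 → i ≤ wL.v x) → wK.Integral (Algebra.trace K L x)) ↔ -d ≤ i

end LocalFieldStruct

/-- `x` is a normal basis generator of `L` over `K`: the Galois conjugates of
`x` form a `K`-basis of `L`. -/
def IsNormalElement (K : Type) [Field K] {L : Type} [Field L] [Algebra K L]
    (x : L) : Prop :=
  LinearIndependent K (fun σ : L ≃ₐ[K] L => σ x) ∧
    Submodule.span K (Set.range fun σ : L ≃ₐ[K] L => σ x) = ⊤

/-- The valuation criterion `VC(L/K)`, for an extension with ramification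
index `e` and different of valuation `d`: every nonzero `x ∈ L` with
`v_L(x) ≡ -d-1 (mod e)` is a normal basis generator of `L` over `K`. -/
def VC (K : Type) [Field K] {L : Type} [Field L] [Algebra K L]
    (wL : LocalFieldStruct L) (e : ℕ) (d : ℤ) : Prop :=
  ∀ x : L, x ≠ 0 → Int.ModEq (e : ℤ) (wL.v x) (-d - 1) → IsNormalElement K x

/-!
Two facts combine. First, `Tr_{L/K}(x) ≠ 0`: the different provides `y` with `v_L(y) = -d - 1`
and non-integral trace. As `v_L(y / x) ∈ v_L(K*)` and `L/K` is totally ramified, `y / x` is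
congruent to a constant `c ∈ K` modulo higher valuation, so `y - c x` has valuation `≥ -d` and
integral trace; hence `Tr(y) ≡ c Tr(x)` forces `Tr(x) ≠ 0`. Second, the `K`-linear relations
among the conjugates `σ x` form a `Gal(L/K)`-stable subspace of `K^{Gal(L/K)}`; for a `p`-group in
characteristic `p` a fixed-point count over `𝔽_p` puts a nonzero constant function in it, which is
the relation `c • Tr(x) = 0`.
-/

theorem IsPGroup.exists_fixed_ne_zero_mem_span_orbit {p : ℕ} [Fact p.Prime] {G V : Type*}
    [Group G] [Finite G] (hG : IsPGroup p G) [AddCommGroup V] [Module (ZMod p) V]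
    [DistribMulAction G V] [SMulCommClass G (ZMod p) V] {v : V} (hv : v ≠ 0) :
    ∃ w ∈ Submodule.span (ZMod p) (MulAction.orbit G v), w ≠ 0 ∧ ∀ g : G, g • w = w := by
  set W := Submodule.span (ZMod p) (MulAction.orbit G v)
  let S : SubMulAction G V :=
    { carrier := W
      smul_mem' := fun g w (hw : w ∈ W) => show g • w ∈ W by
        induction hw using Submodule.span_induction with
        | mem w hw =>
          obtain ⟨h, rfl⟩ := hw
          exact Submodule.subset_span ⟨g * h, mul_smul g h v⟩
        | zero => simp
        | add w w' _ _ hw hw' => simpa only [smul_add] using W.add_mem hw hw'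
        | smul z w _ hw => simpa only [smul_comm g z w] using W.smul_mem z hw }
  have : Module.Finite (ZMod p) W := Module.Finite.span_of_finite _ (Set.finite_range _)
  have : Finite S := Module.finite_of_finite (ZMod p) (M := W)
  have hW : W ≠ ⊥ := fun h => hv <| (Submodule.mem_bot (ZMod p)).mp <|
    h ▸ Submodule.subset_span (MulAction.mem_orbit_self v)
  have hp : p ∣ Nat.card S := by
    rw [show Nat.card S = Nat.card W from rfl, Module.natCard_eq_pow_finrank (K := ZMod p),
      Nat.card_zmod]
    exact dvd_pow_self p (Submodule.finrank_eq_zero.not.mpr hW)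
  obtain ⟨w, hw, hne⟩ := hG.exists_fixed_point_of_prime_dvd_card_of_fixed_point S hp
    (a := ⟨0, W.zero_mem⟩) fun g => Subtype.ext (smul_zero g)
  exact ⟨w, w.2, fun h => hne (Subtype.ext h.symm), fun g => congrArg Subtype.val (hw g)⟩

theorem Submodule.exists_const_mem_of_isPGroup {p : ℕ} [Fact p.Prime] {G R : Type*} [Group G]
    [Finite G] (hG : IsPGroup p G) [Ring R] [CharP R p] (M : Submodule R (G → R))
    (hM : ∀ τ : G, ∀ c ∈ M, (fun σ => c (τ * σ)) ∈ M) (hne : M ≠ ⊥) :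
    ∃ r : R, r ≠ 0 ∧ (fun _ => r) ∈ M := by
  obtain ⟨c, hcM, hc⟩ := M.exists_mem_ne_zero_of_ne_bot hne
  let _ := ZMod.algebra R p
  have : Finite Gᵈᵐᵃ := Finite.of_equiv G DomMulAct.mk
  have hG' : IsPGroup p Gᵈᵐᵃ := hG.of_equiv (MulEquiv.inv' G)
  obtain ⟨v, hvW, hv0, hv⟩ := hG'.exists_fixed_ne_zero_mem_span_orbit hc
  have hvM : v ∈ M := (Submodule.span_le (p := M.restrictScalars (ZMod p))).mpr
    (Set.range_subset_iff.mpr fun τ => hM (DomMulAct.mk.symm τ) c hcM) hvW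
  have hconst : v = fun _ => v 1 := funext fun σ => by
    simpa [DomMulAct.smul_apply] using congrFun (hv (DomMulAct.mk σ)) 1
  exact ⟨v 1, fun h => hv0 (hconst.trans (funext fun _ => h)), hconst ▸ hvM⟩

theorem linearIndependent_algEquiv_apply_of_trace_ne_zero {K L : Type*} [Field K] [Field L]
    [Algebra K L] [FiniteDimensional K L] [IsGalois K L] {p : ℕ} [Fact p.Prime] [CharP K p]
    (hG : IsPGroup p Gal(L/K)) {x : L} (hx : Algebra.trace K L x ≠ 0) :
    LinearIndependent K fun σ : Gal(L/K) => σ x := by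
  set Φ := Fintype.linearCombination K fun σ : Gal(L/K) => σ x
  rw [linearIndependent_iff_injective_fintypeLinearCombination, ← LinearMap.ker_eq_bot]
  by_contra hne
  have hM : ∀ τ : Gal(L/K), ∀ c ∈ LinearMap.ker Φ, (fun σ => c (τ * σ)) ∈ LinearMap.ker Φ := by
    intro τ c hc
    rw [LinearMap.mem_ker, Fintype.linearCombination_apply] at hc ⊢
    calc ∑ σ, c (τ * σ) • σ x = τ⁻¹ (∑ σ, c σ • σ x) := by
          rw [map_sum]
          refine Fintype.sum_equiv (Equiv.mulLeft τ) _ _ fun σ => ?_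
          simp [AlgEquiv.mul_apply]
      _ = 0 := by rw [hc, map_zero]
  obtain ⟨r, hr, hrM⟩ := (LinearMap.ker Φ).exists_const_mem_of_isPGroup hG hM hne
  rw [LinearMap.mem_ker, Fintype.linearCombination_apply, ← Finset.smul_sum,
    ← trace_eq_sum_automorphisms, Algebra.smul_def, ← map_mul, map_eq_zero] at hrM
  exact hx ((mul_eq_zero.mp hrM).resolve_left hr)

theorem AddValuation.map_add_eq_or_eq_of_le {R Γ₀ : Type*} [Ring R]
    [LinearOrderedAddCommMonoidWithTop Γ₀] (v : AddValuation R Γ₀) {x y : R}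
    (h : v (x + y) ≤ v x) : v (x + y) = v x ∨ v (x + y) = v y := by
  rcases lt_or_ge (v y) (v x) with hlt | hle
  · exact Or.inr (v.map_add_eq_of_lt_right hlt)
  · exact Or.inl (le_antisymm h (min_eq_left hle ▸ v.map_add x y))

theorem AddValuation.sum_ne_zero_of_injOn {K Γ₀ ι : Type*} [Field K]
    [LinearOrderedAddCommMonoidWithTop Γ₀] [Nontrivial Γ₀] (v : AddValuation K Γ₀)
    {s : Finset ι} {f : ι → K} (hs : s.Nonempty) (hf : ∀ i ∈ s, f i ≠ 0)
    (hinj : Set.InjOn (fun i => v (f i)) s) : ∑ i ∈ s, f i ≠ 0 := by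
  classical
  obtain ⟨j, hj, hmin⟩ := s.exists_min_image (fun i => v (f i)) hs
  have hlt : v (f j) < v (∑ i ∈ s.erase j, f i) :=
    v.map_lt_sum (v.ne_top_iff.mpr (hf j hj)) fun i hi =>
      (hmin i (Finset.mem_of_mem_erase hi)).lt_of_ne fun h =>
        Finset.ne_of_mem_erase hi (hinj (Finset.mem_of_mem_erase hi) hj h.symm)
  rw [← Finset.add_sum_erase s f hj, ← v.ne_top_iff, v.map_add_eq_of_lt_left hlt]
  exact v.ne_top_iff.mpr (hf j hj)

theorem AddValuation.exists_eq_map_algebraMap_of_mem_span {K L Γ₀ : Type*} [Field K] [Field L]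
    [Algebra K L] [LinearOrderedAddCommMonoidWithTop Γ₀] (v : AddValuation L Γ₀) {u : L}
    (hfar : ∀ c : K, v (u - algebraMap K L c) ≤ v u) (hu : ∃ c : K, v u = v (algebraMap K L c))
    {y : L} (hy : y ∈ Submodule.span K (Set.range ![1, u])) :
    ∃ c : K, v y = v (algebraMap K L c) := by
  obtain ⟨f, rfl⟩ := (Submodule.mem_span_range_iff_exists_fun K).mp hy
  simp only [Fin.sum_univ_two, Matrix.cons_val_zero, Matrix.cons_val_one, Algebra.smul_def,
    mul_one]
  by_cases hb : f 1 = 0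
  · exact ⟨f 0, by simp [hb]⟩
  have hsplit : algebraMap K L (f 0) + algebraMap K L (f 1) * u
      = algebraMap K L (f 1) * (u + algebraMap K L (f 0 / f 1)) := by
    rw [mul_add, ← _root_.map_mul, mul_div_cancel₀ _ hb, add_comm]
  have hle : v (u + algebraMap K L (f 0 / f 1)) ≤ v u := by
    simpa using hfar (-(f 0 / f 1))
  obtain ⟨c, hc⟩ := hu
  rw [hsplit, v.map_mul]
  rcases v.map_add_eq_or_eq_of_le hle with h | h
  · exact ⟨f 1 * c, by rw [h, hc, ← v.map_mul, _root_.map_mul (algebraMap K L)]⟩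
  · exact ⟨f 0, by rw [h, ← v.map_mul, ← _root_.map_mul, mul_div_cancel₀ _ hb]⟩

namespace LocalFieldStruct

section

variable {K : Type} [Field K] (w : LocalFieldStruct K)

theorem v_one : w.v 1 = 0 := by
  simpa using w.v_mul 1 1 one_ne_zero one_ne_zero

open Classical in
/-- `w.v` as an additive valuation: the junk value at `0` becomes `⊤`. -/
noncomputable def addVal : AddValuation K (WithTop ℤ) :=
  AddValuation.of (fun x => if x = 0 then ⊤ else (w.v x : WithTop ℤ)) (if_pos rfl)
    (by simp [v_one])
    (fun x y => by
      by_cases hx : x = 0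
      · simp [hx]
      by_cases hy : y = 0
      · simp [hy]
      by_cases hxy : x + y = 0
      · simp [hxy]
      simp only [hx, hy, hxy, if_false]
      exact_mod_cast w.v_add x y hx hy hxy)
    (fun x y => by
      by_cases hx : x = 0
      · simp [hx]
      by_cases hy : y = 0
      · simp [hy]
      simp [hx, hy, w.v_mul x y hx hy])

theorem addVal_of_ne_zero {x : K} (hx : x ≠ 0) : w.addVal x = w.v x := if_neg hx

end

variable {K L : Type} [Field K] [Field L] [Algebra K L]
  {wK : LocalFieldStruct K} {wL : LocalFieldStruct L} {e : ℕ}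

theorem IsRamificationIndex.addVal_algebraMap (he : IsRamificationIndex wK wL e) {c : K}
    (hc : c ≠ 0) : wL.addVal (algebraMap K L c) = ((e * wK.v c : ℤ) : WithTop ℤ) := by
  rw [addVal_of_ne_zero _ ((map_ne_zero _).mpr hc), he.2 c hc]

theorem IsRamificationIndex.exists_addVal_mul_pow_eq (he : IsRamificationIndex wK wL e)
    {y : L} (hy0 : y ≠ 0) (hy : ∃ c : K, wL.addVal y = wL.addVal (algebraMap K L c))
    {π : L} (hπ0 : π ≠ 0) (hπ : wL.v π = 1) (i : ℕ) :
    ∃ m : ℤ, wL.addVal (y * π ^ i) = ((e * m + i : ℤ) : WithTop ℤ) := by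
  obtain ⟨c, hc⟩ := hy
  have hc0 : c ≠ 0 := by
    rintro rfl
    exact hy0 (by simpa using hc)
  refine ⟨wK.v c, ?_⟩
  rw [AddValuation.map_mul, AddValuation.map_pow, hc, he.addVal_algebraMap hc0,
    addVal_of_ne_zero _ hπ0, hπ]
  push_cast
  simp

theorem IsRamificationIndex.linearIndependent_mul_pow (he : IsRamificationIndex wK wL e)
    {E : Submodule K L} (hE : ∀ y ∈ E, ∃ c : K, wL.addVal y = wL.addVal (algebraMap K L c))
    {ι : Type*} [Fintype ι] {b : ι → E} (hb : LinearIndependent K b)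
    {π : L} (hπ0 : π ≠ 0) (hπ : wL.v π = 1) :
    LinearIndependent K fun ji : ι × Fin e => (b ji.1 : L) * π ^ (ji.2 : ℕ) := by
  classical
  rw [Fintype.linearIndependent_iff]
  intro g hg
  set s : Fin e → E := fun i => ∑ j, g (j, i) • b j
  have hsum : ∑ i, (s i : L) * π ^ (i : ℕ) = 0 := by
    rw [← hg, Fintype.sum_prod_type_right]
    simp [s, Finset.sum_mul]
  have hs : ∀ i, s i = 0 := by
    by_contra! ⟨i₀, hi₀⟩
    refine wL.addVal.sum_ne_zero_of_injOn (s := Finset.univ.filter fun i => s i ≠ 0)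
      (f := fun i => (s i : L) * π ^ (i : ℕ))
      ⟨i₀, by simpa using hi₀⟩ (fun i hi => ?_) (fun i hi j hj hij => ?_) ?_
    · simp only [Finset.mem_filter, Finset.mem_univ, true_and] at hi
      exact mul_ne_zero (by simpa using hi) (pow_ne_zero _ hπ0)
    · simp only [Finset.coe_filter, Finset.mem_univ, true_and, Set.mem_ofPred_eq] at hi hj
      obtain ⟨m, hm⟩ := he.exists_addVal_mul_pow_eq (by simpa using hi) (hE _ (s i).2) hπ0 hπ i
      obtain ⟨m', hm'⟩ := he.exists_addVal_mul_pow_eq (by simpa using hj) (hE _ (s j).2) hπ0 hπ j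
      have hij' : (e * m + i : ℤ) = e * m' + j := by exact_mod_cast hm.symm.trans (hij.trans hm')
      have hdiff : ((i : ℕ) - (j : ℕ) : ℤ) = 0 :=
        Int.eq_zero_of_abs_lt_dvd (m := e) ⟨m' - m, by linear_combination hij'⟩
          (abs_sub_lt_iff.mpr ⟨by omega, by omega⟩)
      exact Fin.ext (by omega)
    · rw [Finset.sum_filter_of_ne, hsum]
      intro i _ h hs
      simp [hs] at h
  rintro ⟨j, i⟩
  exact Fintype.linearIndependent_iff.mp hb (fun j => g (j, i)) (hs i) j

theorem IsRamificationIndex.finrank_mul_le [FiniteDimensional K L]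
    (he : IsRamificationIndex wK wL e) (E : Submodule K L)
    (hE : ∀ y ∈ E, ∃ c : K, wL.addVal y = wL.addVal (algebraMap K L c)) :
    Module.finrank K E * e ≤ Module.finrank K L := by
  obtain ⟨π, hπ0, hπ⟩ := wL.v_surj 1
  simpa using (he.linearIndependent_mul_pow hE (Module.finBasis K E).linearIndependent hπ0
    hπ).fintype_card_le_finrank

theorem IsRamificationIndex.exists_addVal_lt_addVal_sub [FiniteDimensional K L]
    (he : IsRamificationIndex wK wL e) (htot : e = Module.finrank K L) {u : L} (hu0 : u ≠ 0)
    (hu : ∃ c : K, wL.addVal u = wL.addVal (algebraMap K L c)) :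
    ∃ c : K, wL.addVal u < wL.addVal (u - algebraMap K L c) := by
  -- Otherwise `1, u` span a plane with all values in `v_L(K)`, and `2e ≤ [L : K] = e`.
  by_contra! hfar
  have hli : LinearIndependent K ![1, u] :=
    (LinearIndependent.pair_iff' one_ne_zero).mpr fun c hc => hu0 <| by
      simpa [← hc, Algebra.smul_def] using hfar c
  have := he.finrank_mul_le _ fun y hy =>
    wL.addVal.exists_eq_map_algebraMap_of_mem_span hfar hu hy
  rw [finrank_span_eq_card hli, Fintype.card_fin, ← htot] at this
  have := he.1
  omega

theorem IsDifferentVal.trace_ne_zero_of_modEq [FiniteDimensional K L] {d : ℤ}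
    (hd : IsDifferentVal wK wL d) (he : IsRamificationIndex wK wL e)
    (htot : e = Module.finrank K L) {x : L} (hx : x ≠ 0)
    (hmod : Int.ModEq e (wL.v x) (-d - 1)) : Algebra.trace K L x ≠ 0 := by
  obtain ⟨y, hy, hTy⟩ :
      ∃ y : L, (y ≠ 0 → -d - 1 ≤ wL.v y) ∧ ¬ wK.Integral (Algebra.trace K L y) := by
    by_contra! h
    have := (hd (-d - 1)).mp h
    omega
  have hy0 : y ≠ 0 := by
    rintro rfl
    exact hTy (Or.inl (map_zero _))
  have hyv : wL.v y = -d - 1 := by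
    by_contra hne
    exact hTy ((hd (-d)).mpr le_rfl y fun _ => by have := hy hy0; omega)
  set u := y / x
  have hu0 : u ≠ 0 := div_ne_zero hy0 hx
  have huv : wL.v u = -d - 1 - wL.v x := by
    have := wL.v_mul u x hu0 hx
    rw [div_mul_cancel₀ _ hx] at this
    omega
  obtain ⟨m, hm⟩ := hmod.dvd
  obtain ⟨c₀, hc₀, hc₀v⟩ := wK.v_surj m
  obtain ⟨c, hc⟩ := he.exists_addVal_lt_addVal_sub htot hu0
    ⟨c₀, by rw [addVal_of_ne_zero _ hu0, he.addVal_algebraMap hc₀, hc₀v, huv, hm]⟩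
  intro hTx
  set z := y - algebraMap K L c * x
  have hTz : Algebra.trace K L z = Algebra.trace K L y := by
    rw [map_sub, ← Algebra.smul_def, map_smul, hTx, smul_zero, sub_zero]
  refine hTy (hTz ▸ (hd (-d)).mpr le_rfl z fun hz0 => ?_)
  have hz : z = (u - algebraMap K L c) * x := by simp [z, u, sub_mul, div_mul_cancel₀ _ hx]
  have hw0 : u - algebraMap K L c ≠ 0 := by
    rintro h
    exact hz0 (by rw [hz, h, zero_mul])
  rw [addVal_of_ne_zero _ hu0, addVal_of_ne_zero _ hw0, WithTop.coe_lt_coe] at hc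
  rw [hz, wL.v_mul _ _ hw0 hx]
  omega

end LocalFieldStruct

open LocalFieldStruct in
/-- (Elder, Thomas.)  Let `K` be a local field of characteristic `p > 0` and
let `L/K` be a finite totally ramified Galois extension whose degree is a
power of `p`.  Then `VC(L/K)` holds. -/
theorem statement15 {K L : Type} [Field K] [Field L] [Algebra K L]
    [FiniteDimensional K L] [IsGalois K L]
    (wK : LocalFieldStruct K) (wL : LocalFieldStruct L)
    (p : ℕ) (hprime : p.Prime) [CharP K p]
    (e : ℕ) (he : IsRamificationIndex wK wL e)
    (htot : e = Module.finrank K L)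
    (hdeg : ∃ k : ℕ, Module.finrank K L = p ^ k)
    (d : ℤ) (hd : IsDifferentVal wK wL d) :
    VC K wL e d := by
  have : Fact p.Prime := ⟨hprime⟩
  obtain ⟨k, hk⟩ := hdeg
  have hG : IsPGroup p Gal(L/K) := IsPGroup.of_card (n := k) (by
    rw [IsGalois.card_aut_eq_finrank, hk])
  intro x hx hmod
  have hli := linearIndependent_algEquiv_apply_of_trace_ne_zero hG
    (hd.trace_ne_zero_of_modEq he htot hx hmod)
  exact ⟨hli, hli.span_eq_top_of_card_eq_finrank (by
    rw [← Nat.card_eq_fintype_card, IsGalois.card_aut_eq_finrank])⟩
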